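/- Consider the online pricing model with η-pessimistic buyers, where the seller runs the two-phase pricing algorithm with parameter λ ∈ (0,1], and suppose q_min > 2λ. Let E_1 be the event that for every round t > t_λ and every active type i ∈ S_t, the number of reviews left by type-i buyers before round t is at least (1/2)·q_min·(t−1). Then Pr(E_1^c) ≤ 1/T. -/

import Mathlib

/-! An active type is never priced out: the Phase-2 price is at most its seller-side bound
`LB_{i,t}`, which is below the buyer's `LB_t ≤ τ_t`, and active sets only shrink, while in
Phase 1 every buyer purchases. So before round `t` an active type has exactly as many reviews
as arrivals, a sum of `t - 1` independent Bernoulli indicators of mean `q_i ≥ q_min`. By the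
multiplicative Chernoff bound this falls below half of `q_min (t - 1)` with probability at most
`exp (-(1 - log 2) q_min (t - 1) / 2) ≤ (d T²)⁻²`, because `t - 1 ≥ t_λ ≥ 32 log (d T²) / λ` and
`q_min > 2λ`. A union bound over at most `T` rounds and `d` types gives `1 / T`. -/

open MeasureTheory ProbabilityTheory Finset
open scoped ENNReal Classical

/-- The online pricing model with `d` buyer types and `T` rounds (rounds are indexed
`1, …, T`).  Types arrive i.i.d. from the distribution `q` on `Fin d`; type `i` has
ex-ante value `θ i` and ex-post value distribution `D i` supported on `[0,1]` with
mean `θ i`.  The ex-post values are pre-generated: the buyer of round `s`, if of type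
`i` and purchasing, reports the review `vdraw s i`.  The seller posts the price
`price t` on round `t`, the buyer of round `t` uses the threshold `tau t` and buys
iff `price t ≤ tau t` (field `buy`, constrained by `BuyerRule` below). -/
structure PricingModel (Ω : Type) [MeasurableSpace Ω] where
  d : ℕ
  T : ℕ
  hd : 1 ≤ d
  hT : 1 ≤ T
  η : ℝ
  hη : η ∈ Set.Ioo (0:ℝ) 1
  lam : ℝ
  hlam : lam ∈ Set.Ioc (0:ℝ) 1
  q : Fin d → ℝ
  hq_nonneg : ∀ i, 0 ≤ q i
  hq_sum : ∑ i, q i = 1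
  θ : Fin d → ℝ
  hθ_mem : ∀ i, θ i ∈ Set.Icc (0:ℝ) 1
  hθ_mono : Monotone θ
  Pr : Measure Ω
  hPr : IsProbabilityMeasure Pr
  D : Fin d → Measure ℝ
  hD_prob : ∀ i, IsProbabilityMeasure (D i)
  hD_supp : ∀ i, (D i) (Set.Icc (0:ℝ) 1) = 1
  hD_mean : ∀ i, (∫ x, x ∂(D i)) = θ i
  itype : ℕ → Ω → Fin d
  vdraw : ℕ → Fin d → Ω → ℝ
  h_itype_meas : ∀ s, Measurable (itype s)
  h_vdraw_meas : ∀ s i, Measurable (vdraw s i)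
  h_itype_law : ∀ s i, Pr {ω | itype s ω = i} = ENNReal.ofReal (q i)
  h_vdraw_law : ∀ s i, Measure.map (vdraw s i) Pr = D i
  h_indep : iIndepFun
      (fun s ω => (itype s ω, fun i => vdraw s i ω)) Pr
  h_indep_within : ∀ s, IndepFun (itype s) (fun ω i => vdraw s i ω) Pr
  price : ℕ → Ω → ℝ
  tau : ℕ → Ω → ℝ
  buy : ℕ → Ω → Bool
  pstar : ℝ
  hpstar_mem : pstar ∈ Set.Icc (0:ℝ) 1
  hpstar_opt : ∀ p ∈ Set.Icc (0:ℝ) 1,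
      p * (∑ i, if p ≤ θ i then q i else 0) ≤ pstar * (∑ i, if pstar ≤ θ i then q i else 0)

namespace PricingModel

variable {Ω : Type} [MeasurableSpace Ω] (M : PricingModel Ω)

/-- The review left on round `s` (relevant only if a purchase occurred). -/
noncomputable def review (s : ℕ) (ω : Ω) : ℝ := M.vdraw s (M.itype s ω) ω

/-- Rounds before round `t` on which a buyer of type `i` purchased (and hence reviewed). -/
noncomputable def Phi (i : Fin M.d) (t : ℕ) (ω : Ω) : Finset ℕ :=
  (Finset.Ico 1 t).filter (fun s => M.buy s ω = true ∧ M.itype s ω = i)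

/-- Number of reviews by buyers of type `i` before round `t`. -/
noncomputable def nPhi (i : Fin M.d) (t : ℕ) (ω : Ω) : ℕ := (M.Phi i t ω).card

/-- Sum of the reviews left by buyers of type `i` before round `t`. -/
noncomputable def phiSum (i : Fin M.d) (t : ℕ) (ω : Ω) : ℝ :=
  ∑ s ∈ M.Phi i t ω, M.review s ω

/-- The lower confidence bound `LB_t` available to the round-`t` buyer. -/
noncomputable def LBt (t : ℕ) (ω : Ω) : ℝ :=
  if M.nPhi (M.itype t ω) t ω = 0 then 0
  else max 0 (M.phiSum (M.itype t ω) t ω / (M.nPhi (M.itype t ω) t ω)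
      - Real.sqrt (Real.log ((t : ℝ) / M.η) / (2 * (M.nPhi (M.itype t ω) t ω))))

/-- The seller's lower confidence bound `LB_{i,t}` on the value of type `i` at round `t`. -/
noncomputable def LBi (i : Fin M.d) (t : ℕ) (ω : Ω) : ℝ :=
  if M.nPhi i t ω = 0 then 0
  else max 0 (M.phiSum i t ω / (M.nPhi i t ω)
      - Real.sqrt (Real.log ((M.T : ℝ) / M.η) / (2 * (M.nPhi i t ω))))

/-- Length of Phase 1: `t_λ = 32 ln(d T²)/λ + 1` (rounded). -/
noncomputable def tlam : ℕ := ⌈32 * Real.log ((M.d : ℝ) * (M.T : ℝ) ^ 2) / M.lam⌉₊ + 1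

/-- Empirical frequency of type `i` during Phase 1. -/
noncomputable def qbar (i : Fin M.d) (ω : Ω) : ℝ :=
  (((Finset.Icc 1 M.tlam).filter (fun s => M.itype s ω = i)).card : ℝ) / M.tlam

/-- The set `Q` of types appearing on at least a `(3λ/4)`-fraction of Phase-1 rounds. -/
noncomputable def Qset (ω : Ω) : Finset (Fin M.d) :=
  Finset.univ.filter (fun i => 3 * M.lam / 4 ≤ M.qbar i ω)

/-- The confidence radius `ρ_t = sqrt(ln(d T²)/(2(t − t_λ)))`. -/
noncomputable def rho (t : ℕ) : ℝ :=
  Real.sqrt (Real.log ((M.d : ℝ) * (M.T : ℝ) ^ 2) / (2 * ((t : ℝ) - (M.tlam : ℝ))))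

/-- `ρ` with the convention `ρ_{t_λ} = 1`. -/
noncomputable def rho' (t : ℕ) : ℝ := if t = M.tlam then 1 else M.rho t

/-- The revenue estimate `μ̄_{i,t}`. -/
noncomputable def mubar (i : Fin M.d) (t : ℕ) (ω : Ω) : ℝ :=
  (∑ s ∈ Finset.Icc (M.tlam + 1) t,
      if M.buy s ω = true ∧ M.θ i ≤ M.θ (M.itype s ω) ∧ M.itype s ω ∈ M.Qset ω
      then M.θ i else 0) / ((t : ℝ) - (M.tlam : ℝ))

/-- Upper confidence bound `μ̂_{i,t}`. -/
noncomputable def muhat (i : Fin M.d) (t : ℕ) (ω : Ω) : ℝ := M.mubar i t ω + M.rho t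

/-- Lower confidence bound `μ̌_{i,t}`. -/
noncomputable def mucheck (i : Fin M.d) (t : ℕ) (ω : Ω) : ℝ := M.mubar i t ω - M.rho t

/-- `rev(p, Q) = p ⋅ Pr_{j∼P}[θ_j ≥ p and j ∈ Q]` (for the realized random set `Q`). -/
noncomputable def revQ (p : ℝ) (ω : Ω) : ℝ :=
  p * ∑ j, if p ≤ M.θ j ∧ j ∈ M.Qset ω then M.q j else 0

/-- The seller's realized revenue over the `T` rounds. -/
noncomputable def revenue (ω : Ω) : ℝ :=
  ∑ t ∈ Finset.Icc 1 M.T, M.price t ω * (if M.buy t ω then 1 else 0)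

/-- Expected regret: `T⋅p*⋅Pr[θ_i ≥ p*] − E[Σ_t p_t b_t]`. -/
noncomputable def regret : ℝ :=
  (M.T : ℝ) * (M.pstar * ∑ i, if M.pstar ≤ M.θ i then M.q i else 0)
    - ∫ ω, M.revenue ω ∂M.Pr

/-- The smallest appearance probability of any type. -/
noncomputable def qmin : ℝ := ⨅ i, M.q i

/-- σ-algebra of the history before round `t` (all types and potential reviews of
rounds `< t`). -/
noncomputable def histMS (t : ℕ) : MeasurableSpace Ω :=
  MeasurableSpace.comap
    (fun ω => fun s : Fin t => (M.itype (s : ℕ) ω, fun i => M.vdraw (s : ℕ) i ω))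
    inferInstance

/-- Buyers purchase iff the price is at most their threshold. -/
def BuyerRule : Prop := ∀ t ω, (M.buy t ω = true ↔ M.price t ω ≤ M.tau t ω)

/-- η-pessimism: the buyer's threshold is at least the lower confidence bound `LB_t`. -/
def Pessimistic : Prop := ∀ t ω, 1 ≤ t → t ≤ M.T → M.LBt t ω ≤ M.tau t ω

/-- The buyer's threshold is a function of the history (in particular of the past
reviews) and of the buyer's own type. -/
def TauAdapted : Prop :=
  ∀ t, Measurable[M.histMS t ⊔ MeasurableSpace.comap (M.itype t) inferInstance] (M.tau t)

/-- The seller's price is a measurable function of the observable history. -/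
def PriceAdapted : Prop := ∀ t, Measurable[M.histMS t] (M.price t)

end PricingModel

/-- A run of the two-phase pricing algorithm: Phase 1 (rounds `1,…,t_λ`) gives the item
for free; `S` is the successively refined active set of Phase 2, initialized at `Q`,
during which the price is `min_{i ∈ S_t} min(θ_i, LB_{i,t})` and types whose revenue
upper confidence bound falls below the best lower confidence bound are eliminated. -/
structure Algorithm {Ω : Type} [MeasurableSpace Ω] (M : PricingModel Ω) where
  S : ℕ → Ω → Finset (Fin M.d)
  h_phase1_price : ∀ t ω, t ≤ M.tlam → M.price t ω = 0
  h_phase1_buy : ∀ t ω, 1 ≤ t → t ≤ M.tlam → M.buy t ω = true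
  h_S_init : ∀ ω, S (M.tlam + 1) ω = M.Qset ω
  h_price2 : ∀ t ω, M.tlam < t →
      M.price t ω =
        if h : (S t ω).Nonempty then (S t ω).inf' h (fun i => min (M.θ i) (M.LBi i t ω))
        else 0
  h_S_step : ∀ t ω, M.tlam < t →
      S (t + 1) ω = (S t ω).filter
        (fun i => ∃ j ∈ S t ω, j ≤ i ∧ ∀ k ∈ S t ω, M.mucheck k t ω ≤ M.muhat j t ω)

namespace ProbabilityTheory

variable {Ω ι β : Type*} [MeasurableSpace Ω] {μ : Measure Ω}

lemma mgf_indicator_one [IsProbabilityMeasure μ] {A : Set Ω} (hA : MeasurableSet A) (c : ℝ) :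
    mgf (A.indicator 1) μ c = 1 + (Real.exp c - 1) * μ.real A := by
  have hexp : (fun ω => Real.exp (c * A.indicator 1 ω))
      = fun ω => 1 + A.indicator (fun _ => Real.exp c - 1) ω := by
    funext ω
    by_cases h : ω ∈ A <;> simp [h]
  rw [mgf, hexp, integral_add (integrable_const 1) ((integrable_const _).indicator hA),
    integral_const, integral_indicator_const _ hA, probReal_univ]
  simp [mul_comm]

/-- Multiplicative Chernoff bound for the lower tail, with the exponential moment taken at
`-log 2`. -/
lemma measureReal_card_filter_le_half_le [MeasurableSpace β] {Y : ι → Ω → β}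
    (hY : iIndepFun Y μ) (hYm : ∀ s, Measurable (Y s)) {B : Set β} (hB : MeasurableSet B)
    {p : ℝ} (hp : ∀ s, p ≤ μ.real (Y s ⁻¹' B)) (S : Finset ι) :
    μ.real {ω | (#{s ∈ S | Y s ω ∈ B} : ℝ) ≤ p * #S / 2}
      ≤ Real.exp (-((1 - Real.log 2) / 2 * (p * #S))) := by
  have := hY.isProbabilityMeasure
  set X : ι → Ω → ℝ := fun s => (Y s ⁻¹' B).indicator 1
  have hXm : ∀ s, Measurable (X s) := fun s => measurable_const.indicator (hYm s hB)
  have hXind : iIndepFun X μ :=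
    hY.comp (fun _ => B.indicator (1 : β → ℝ)) (fun _ => measurable_const.indicator hB)
  have hcount : ∀ ω, (#{s ∈ S | Y s ω ∈ B} : ℝ) = (∑ s ∈ S, X s) ω := by
    intro ω
    simp [X, Finset.sum_apply, Set.indicator_apply]
  have hint : Integrable (fun ω => Real.exp (-Real.log 2 * (∑ s ∈ S, X s) ω)) μ := by
    refine .of_bound (by fun_prop) 1 (.of_forall fun ω => ?_)
    have hsum : 0 ≤ (∑ s ∈ S, X s) ω := by rw [← hcount]; positivity
    rw [Real.norm_of_nonneg (Real.exp_nonneg _), Real.exp_le_one_iff]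
    exact mul_nonpos_of_nonpos_of_nonneg (neg_nonpos.2 (Real.log_nonneg one_le_two)) hsum
  have hfactor : ∀ s, mgf (X s) μ (-Real.log 2) ≤ Real.exp (-(p / 2)) := by
    intro s
    rw [mgf_indicator_one (hYm s hB), Real.exp_neg, Real.exp_log two_pos]
    have := Real.add_one_le_exp (-(p / 2))
    linarith [hp s]
  have hmgf : mgf (∑ s ∈ S, X s) μ (-Real.log 2) ≤ Real.exp (-(p / 2)) ^ #S := by
    rw [hXind.mgf_sum hXm, ← Finset.prod_const]
    exact Finset.prod_le_prod (fun s _ => mgf_nonneg) (fun s _ => hfactor s)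
  calc μ.real {ω | (#{s ∈ S | Y s ω ∈ B} : ℝ) ≤ p * #S / 2}
      = μ.real {ω | (∑ s ∈ S, X s) ω ≤ p * #S / 2} := by simp_rw [hcount]
    _ ≤ Real.exp (-(-Real.log 2) * (p * #S / 2)) * mgf (∑ s ∈ S, X s) μ (-Real.log 2) :=
        measure_le_le_exp_mul_mgf _ (neg_nonpos.2 (Real.log_nonneg one_le_two)) hint
    _ ≤ Real.exp (Real.log 2 * (p * #S / 2)) * Real.exp (-(p / 2)) ^ #S := by
        rw [neg_neg]; gcongr
    _ = Real.exp (-((1 - Real.log 2) / 2 * (p * #S))) := by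
        rw [← Real.exp_nat_mul, ← Real.exp_add]; ring_nf

end ProbabilityTheory

attribute [instance] PricingModel.hPr

namespace PricingModel

variable {Ω : Type} [MeasurableSpace Ω] (M : PricingModel Ω)

noncomputable def arrivals (i : Fin M.d) (t : ℕ) (ω : Ω) : Finset ℕ :=
  (Ico 1 t).filter (fun s => M.itype s ω = i)

lemma qmin_le (i : Fin M.d) : M.qmin ≤ M.q i :=
  ciInf_le (Set.finite_range _).bddBelow i

lemma measureReal_itype_preimage (s : ℕ) (i : Fin M.d) :
    M.Pr.real (M.itype s ⁻¹' {i}) = M.q i := by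
  rw [measureReal_def, ← ENNReal.toReal_ofReal (M.hq_nonneg i), ← M.h_itype_law s i]
  rfl

lemma iIndepFun_itype : iIndepFun M.itype M.Pr :=
  M.h_indep.comp (fun _ => Prod.fst) (fun _ => measurable_fst)

lemma log_le_lam_mul_tlam : 32 * Real.log (M.d * M.T ^ 2) ≤ M.lam * M.tlam := by
  have hceil := Nat.le_ceil (32 * Real.log (M.d * M.T ^ 2) / M.lam)
  rw [div_le_iff₀ M.hlam.1] at hceil
  rw [tlam]
  push_cast
  nlinarith [M.hlam.1]

lemma LBi_le_LBt {t : ℕ} {i : Fin M.d} {ω : Ω} (hit : M.itype t ω = i) (ht : 1 ≤ t)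
    (htT : t ≤ M.T) : M.LBi i t ω ≤ M.LBt t ω := by
  rw [LBi, LBt, hit]
  split_ifs with h
  · rfl
  have hlog : Real.log (t / M.η) ≤ Real.log (M.T / M.η) := by
    have := M.hη.1
    gcongr
  gcongr

lemma log_d_mul_T_sq_nonneg : 0 ≤ Real.log (M.d * M.T ^ 2) :=
  Real.log_nonneg (one_le_mul_of_one_le_of_one_le (by exact_mod_cast M.hd)
    (one_le_pow₀ (by exact_mod_cast M.hT)))

lemma log_le_qmin_mul_of_tlam_lt (hq : 2 * M.lam < M.qmin) {t : ℕ} (ht : M.tlam < t) :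
    64 * Real.log (M.d * M.T ^ 2) ≤ M.qmin * ((t : ℝ) - 1) := by
  have htlam : (M.tlam : ℝ) ≤ t - 1 := by
    rw [le_sub_iff_add_le]
    exact_mod_cast ht
  calc 64 * Real.log (M.d * M.T ^ 2) ≤ 2 * (M.lam * M.tlam) := by
        linarith [M.log_le_lam_mul_tlam]
    _ ≤ 2 * (M.lam * (t - 1)) := by have := M.hlam.1; gcongr
    _ ≤ M.qmin * (t - 1) := by
        rw [← mul_assoc]
        exact mul_le_mul_of_nonneg_right hq.le ((Nat.cast_nonneg _).trans htlam)

noncomputable def fewArrivals (i : Fin M.d) (t : ℕ) : Set Ω :=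
  {ω | (#(M.arrivals i t ω) : ℝ) < 1 / 2 * M.qmin * ((t : ℝ) - 1)}

lemma measureReal_fewArrivals_le (hq : 2 * M.lam < M.qmin) (i : Fin M.d) {t : ℕ}
    (ht : M.tlam < t) : M.Pr.real (M.fewArrivals i t) ≤ ((M.d * M.T ^ 2 : ℝ) ^ 2)⁻¹ := by
  have hcard : (#(Ico 1 t) : ℝ) = t - 1 := by
    rw [Nat.card_Ico, Nat.cast_sub (by omega), Nat.cast_one]
  have hp : ∀ s, M.qmin ≤ M.Pr.real (M.itype s ⁻¹' {i}) := fun s =>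
    M.measureReal_itype_preimage s i ▸ M.qmin_le i
  have hrate : 2 * Real.log (M.d * M.T ^ 2) ≤ (1 - Real.log 2) / 2 * (M.qmin * #(Ico 1 t)) := by
    rw [hcard]
    nlinarith [M.log_le_qmin_mul_of_tlam_lt hq ht, M.log_d_mul_T_sq_nonneg, Real.log_two_lt_d9]
  have hpos : (0 : ℝ) < (M.d * M.T ^ 2) ^ 2 := by
    have := M.hd; have := M.hT; positivity
  calc M.Pr.real (M.fewArrivals i t)
      ≤ Real.exp (-((1 - Real.log 2) / 2 * (M.qmin * #(Ico 1 t)))) := by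
        refine (measureReal_mono fun ω hω => ?_).trans (measureReal_card_filter_le_half_le
          M.iIndepFun_itype M.h_itype_meas (measurableSet_singleton i) hp _)
        simp only [fewArrivals, arrivals, Set.mem_ofPred_eq, Set.mem_singleton_iff, hcard]
          at hω ⊢
        linarith
    _ ≤ Real.exp (-Real.log ((M.d * M.T ^ 2) ^ 2)) := by
        rw [Real.log_pow]
        exact Real.exp_le_exp.2 (by push_cast; linarith)
    _ = ((M.d * M.T ^ 2 : ℝ) ^ 2)⁻¹ := by rw [Real.exp_neg, Real.exp_log hpos]

lemma measureReal_biUnion_fewArrivals_le (hq : 2 * M.lam < M.qmin) :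
    M.Pr.real (⋃ t ∈ Icc (M.tlam + 1) M.T, ⋃ i, M.fewArrivals i t) ≤ 1 / M.T := by
  have hd : (1 : ℝ) ≤ M.d := by exact_mod_cast M.hd
  have hT : (1 : ℝ) ≤ M.T := by exact_mod_cast M.hT
  have hrounds : (#(Icc (M.tlam + 1) M.T) : ℝ) ≤ M.T := by
    rw [Nat.card_Icc]
    exact_mod_cast Nat.sub_le_of_le_add (by omega)
  calc _ ≤ ∑ t ∈ Icc (M.tlam + 1) M.T, ∑ i, M.Pr.real (M.fewArrivals i t) :=
        (measureReal_biUnion_finset_le _ _).trans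
          (sum_le_sum fun t _ => measureReal_iUnion_fintype_le _)
    _ ≤ ∑ t ∈ Icc (M.tlam + 1) M.T, ∑ i : Fin M.d, ((M.d * M.T ^ 2 : ℝ) ^ 2)⁻¹ :=
        sum_le_sum fun t ht => sum_le_sum fun i _ =>
          M.measureReal_fewArrivals_le hq i (by rw [mem_Icc] at ht; omega)
    _ = #(Icc (M.tlam + 1) M.T) * (M.d * ((M.d * M.T ^ 2 : ℝ) ^ 2)⁻¹) := by
        simp only [sum_const, card_univ, Fintype.card_fin, nsmul_eq_mul]
    _ ≤ M.T * (M.d * ((M.d * M.T ^ 2 : ℝ) ^ 2)⁻¹) := by gcongr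
    _ = 1 / (M.d * M.T ^ 3) := by field_simp
    _ ≤ 1 / M.T := by
        gcongr
        exact (le_self_pow₀ hT (by norm_num)).trans (le_mul_of_one_le_left (by positivity) hd)

end PricingModel

namespace Algorithm

variable {Ω : Type} [MeasurableSpace Ω] {M : PricingModel Ω} (A : Algorithm M)

lemma S_subset_of_le {ω : Ω} {s t : ℕ} (hs : M.tlam < s) (hst : s ≤ t) :
    A.S t ω ⊆ A.S s ω := by
  induction t, hst using Nat.le_induction with
  | base => exact subset_rfl
  | succ t hst ih =>
    rw [A.h_S_step t ω (hs.trans_le hst)]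
    exact (filter_subset _ _).trans ih

lemma buy_of_mem_S (hP : M.Pessimistic) (hB : M.BuyerRule) {t : ℕ} {i : Fin M.d} {ω : Ω}
    (ht : M.tlam < t) (htT : t ≤ M.T) (hi : i ∈ A.S t ω) (hit : M.itype t ω = i) :
    M.buy t ω = true := by
  have ht1 : 1 ≤ t := by unfold PricingModel.tlam at ht; omega
  have hprice : M.price t ω ≤ min (M.θ i) (M.LBi i t ω) := by
    rw [A.h_price2 t ω ht, dif_pos ⟨i, hi⟩]
    exact inf'_le _ hi
  rw [hB]
  calc M.price t ω ≤ M.LBi i t ω := hprice.trans (min_le_right _ _)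
    _ ≤ M.LBt t ω := M.LBi_le_LBt hit ht1 htT
    _ ≤ M.tau t ω := hP t ω ht1 htT

lemma nPhi_eq_card_arrivals (hP : M.Pessimistic) (hB : M.BuyerRule) {t : ℕ} {i : Fin M.d}
    {ω : Ω} (htT : t ≤ M.T) (hi : i ∈ A.S t ω) :
    M.nPhi i t ω = #(M.arrivals i t ω) := by
  rw [PricingModel.nPhi, PricingModel.Phi, PricingModel.arrivals]
  congr 1
  refine filter_congr fun s hs => and_iff_right_of_imp fun hsi => ?_
  rw [mem_Ico] at hs
  rcases le_or_gt s M.tlam with hs1 | hs1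
  · exact A.h_phase1_buy s ω hs.1 hs1
  · exact A.buy_of_mem_S hP hB hs1 (hs.2.le.trans htT) (A.S_subset_of_le hs1 hs.2.le hi) hsi

lemma setOf_not_many_reviews_subset (hP : M.Pessimistic) (hB : M.BuyerRule) :
    {ω | ¬ ∀ t, M.tlam < t → t ≤ M.T → ∀ i ∈ A.S t ω,
        (1 / 2) * M.qmin * ((t : ℝ) - 1) ≤ (M.nPhi i t ω : ℝ)}
      ⊆ ⋃ t ∈ Icc (M.tlam + 1) M.T, ⋃ i, M.fewArrivals i t := by
  intro ω hω
  simp only [Set.mem_ofPred_eq, not_forall, not_le] at hω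
  obtain ⟨t, ht, htT, i, hi, hlt⟩ := hω
  simp only [Set.mem_iUnion]
  refine ⟨t, mem_Icc.2 ⟨ht, htT⟩, i, ?_⟩
  rwa [A.nPhi_eq_card_arrivals hP hB htT hi] at hlt

end Algorithm

/-- if `q_min > 2λ`, then except with probability `1/T`, every active
type `i ∈ S_t` of every Phase-2 round `t` has at least `(1/2) q_min (t−1)` reviews. -/
theorem lemma_many_reviews_large_qmin :
    ∀ (Ω : Type) [MeasurableSpace Ω] (M : PricingModel Ω) (A : Algorithm M),
      M.Pessimistic → M.BuyerRule → M.TauAdapted →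
      2 * M.lam < M.qmin →
      M.Pr {ω | ¬ ∀ t, M.tlam < t → t ≤ M.T → ∀ i ∈ A.S t ω,
          (1 / 2) * M.qmin * ((t : ℝ) - 1) ≤ (M.nPhi i t ω : ℝ)}
        ≤ 1 / (M.T : ℝ≥0∞) := by
  intro Ω _ M A hP hB _ hq
  have hreal := (measureReal_mono (A.setOf_not_many_reviews_subset hP hB)
    (measure_ne_top _ _)).trans (M.measureReal_biUnion_fewArrivals_le hq)
  rw [← ofReal_measureReal, ← ENNReal.ofReal_natCast, ← ENNReal.ofReal_one,
    ← ENNReal.ofReal_div_of_pos (by exact_mod_cast M.hT)]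
  exact ENNReal.ofReal_le_ofReal hreal
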